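/- arXiv:math/0108142 — 6 statements merged into one kernel-verified Lean document; each statement's English description precedes it below -/
import Mathlib

section
/- Let G be a Lie algebra over a field K and W = (W^{ij}_s) a collection of scalars, 1 ≤ i,j,s ≤ n. Define a bracket on G^n by ([x,y]_W)_s = Σ_{i,j} W^{ij}_s [x_i, y_j]. If W^{ij}_s = W^{ji}_s for all i,j,s and Σ_k (W^{sk}_i W^{qp}_k − W^{qk}_i W^{sp}_k) = 0 for all i,s,q,p, then [·,·]_W is a Lie bracket on G^n (bilinear, antisymmetric, and satisfying the Jacobi identity). -/
/-!
The coefficient of `⁅x i, ⁅y p, z q⁆⁆` in the `s`-th component of `[x, [y, z]_W]_W` is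
`C^s_{ipq} = Σ_j W^{ij}_s W^{pq}_j`. Symmetry of `W` makes `C` symmetric in `p, q`, and the
second condition on `W` says exactly that it is symmetric in `i, p`; hence `C` is invariant
under cyclic permutations of `(i, p, q)`, and the Jacobi identity for `[·,·]_W` collapses,
coefficient by coefficient, to the Jacobi identity in the underlying Lie algebra.
-/

open Finset

lemma Finset.sum_sum_sum_rotate {ι M : Type*} [Fintype ι] [AddCommMonoid M]
    (f : ι → ι → ι → M) : ∑ i, ∑ p, ∑ q, f i p q = ∑ i, ∑ p, ∑ q, f q i p := by
  rw [Finset.sum_comm]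
  exact sum_congr rfl fun _ _ => Finset.sum_comm

lemma Finset.sum_smul_sum_sum_rotate {R ι M : Type*} [Fintype ι] [AddCommMonoid M] [SMul R M]
    {C : ι → ι → ι → R} (hC : ∀ i p q, C i p q = C q i p) (f : ι → ι → ι → M) :
    ∑ i, ∑ p, ∑ q, C i p q • f i p q = ∑ i, ∑ p, ∑ q, C i p q • f q i p :=
  (sum_sum_sum_rotate _).trans <|
    sum_congr rfl fun _ _ => sum_congr rfl fun _ _ => sum_congr rfl fun _ _ => by rw [← hC]

section WBracket

variable {R ι L : Type*} [CommRing R] [Fintype ι] [LieRing L] [LieAlgebra R L]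
  (W : ι → ι → ι → R)

def wBracket (x y : ι → L) : ι → L :=
  fun s => ∑ i, ∑ j, W i j s • ⁅x i, y j⁆

lemma wBracket_add_left (x x' y : ι → L) :
    wBracket W (x + x') y = wBracket W x y + wBracket W x' y := by
  funext s
  simp [wBracket, add_lie, smul_add, sum_add_distrib]

lemma wBracket_add_right (x y y' : ι → L) :
    wBracket W x (y + y') = wBracket W x y + wBracket W x y' := by
  funext s
  simp [wBracket, lie_add, smul_add, sum_add_distrib]

lemma wBracket_smul_left (c : R) (x y : ι → L) :
    wBracket W (c • x) y = c • wBracket W x y := by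
  funext s
  simp [wBracket, smul_lie, smul_comm _ c, smul_sum]

lemma wBracket_smul_right (c : R) (x y : ι → L) :
    wBracket W x (c • y) = c • wBracket W x y := by
  funext s
  simp [wBracket, lie_smul, smul_comm _ c, smul_sum]

lemma wBracket_eq_neg_wBracket (hsym : ∀ i j s, W i j s = W j i s) (x y : ι → L) :
    wBracket W x y = -wBracket W y x := by
  funext s
  rw [Pi.neg_apply, wBracket, wBracket, Finset.sum_comm, ← sum_neg_distrib]
  refine sum_congr rfl fun i _ => ?_
  rw [← sum_neg_distrib]
  refine sum_congr rfl fun j _ => ?_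
  rw [hsym, ← smul_neg, lie_skew]

def wAssocCoeff (i p q s : ι) : R :=
  ∑ j, W i j s * W p q j

lemma wBracket_wBracket_apply (x y z : ι → L) (s : ι) :
    wBracket W x (wBracket W y z) s =
      ∑ i, ∑ p, ∑ q, wAssocCoeff W i p q s • ⁅x i, ⁅y p, z q⁆⁆ := by
  unfold wBracket
  refine sum_congr rfl fun i _ => ?_
  calc ∑ j, W i j s • ⁅x i, ∑ p, ∑ q, W p q j • ⁅y p, z q⁆⁆
      = ∑ j, ∑ p, ∑ q, (W i j s * W p q j) • ⁅x i, ⁅y p, z q⁆⁆ := by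
        simp only [lie_sum, lie_smul, smul_sum, smul_smul]
    _ = ∑ p, ∑ q, ∑ j, (W i j s * W p q j) • ⁅x i, ⁅y p, z q⁆⁆ := by
        rw [Finset.sum_comm]
        exact sum_congr rfl fun _ _ => Finset.sum_comm
    _ = ∑ p, ∑ q, wAssocCoeff W i p q s • ⁅x i, ⁅y p, z q⁆⁆ := by
        simp only [wAssocCoeff, sum_smul]

lemma wAssocCoeff_comm_left (hcomm : ∀ i s q p, ∑ k, (W s k i * W q p k - W q k i * W s p k) = 0)
    (i p q s : ι) : wAssocCoeff W i p q s = wAssocCoeff W p i q s := by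
  rw [← sub_eq_zero, wAssocCoeff, wAssocCoeff, ← sum_sub_distrib]
  exact hcomm s i p q

lemma wAssocCoeff_comm_right (hsym : ∀ i j s, W i j s = W j i s) (i p q s : ι) :
    wAssocCoeff W i p q s = wAssocCoeff W i q p s :=
  sum_congr rfl fun j _ => by rw [hsym p q]

lemma wAssocCoeff_rotate (hsym : ∀ i j s, W i j s = W j i s)
    (hcomm : ∀ i s q p, ∑ k, (W s k i * W q p k - W q k i * W s p k) = 0) (i p q s : ι) :
    wAssocCoeff W i p q s = wAssocCoeff W q i p s := by
  rw [wAssocCoeff_comm_left W hcomm, wAssocCoeff_comm_right W hsym,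
    wAssocCoeff_comm_left W hcomm, wAssocCoeff_comm_right W hsym]

lemma wBracket_jacobi (hsym : ∀ i j s, W i j s = W j i s)
    (hcomm : ∀ i s q p, ∑ k, (W s k i * W q p k - W q k i * W s p k) = 0) (x y z : ι → L) :
    wBracket W x (wBracket W y z) + wBracket W y (wBracket W z x) +
      wBracket W z (wBracket W x y) = 0 := by
  funext s
  have hC := fun i p q => wAssocCoeff_rotate W hsym hcomm i p q s
  simp only [Pi.add_apply, Pi.zero_apply, wBracket_wBracket_apply]
  rw [sum_smul_sum_sum_rotate hC (fun i p q => ⁅z i, ⁅x p, y q⁆⁆),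
    sum_smul_sum_sum_rotate hC (fun i p q => ⁅y i, ⁅z p, x q⁆⁆),
    sum_smul_sum_sum_rotate hC (fun i p q => ⁅y q, ⁅z i, x p⁆⁆)]
  simp only [← sum_add_distrib, ← smul_add, lie_jacobi, smul_zero, sum_const_zero]

end WBracket

/-- If W is symmetric and satisfies the commutation identity, then the
bracket `([x,y]_W)_s = Σ_{i,j} W^{ij}_s [x_i, y_j]` is a Lie bracket on `G^n`:
bilinear, antisymmetric and satisfying the Jacobi identity. -/
theorem universal_extension_is_lie_bracket
    {K : Type*} [Field K] {G : Type*} [LieRing G] [LieAlgebra K G]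
    (n : ℕ) (W : Fin n → Fin n → Fin n → K)
    (hsym : ∀ i j s, W i j s = W j i s)
    (hcomm : ∀ i s q p, ∑ k, (W s k i * W q p k - W q k i * W s p k) = 0)
    (br : (Fin n → G) → (Fin n → G) → (Fin n → G))
    (hbr : ∀ x y s, br x y s = ∑ i, ∑ j, W i j s • ⁅x i, y j⁆) :
    (∀ x x' y, br (x + x') y = br x y + br x' y) ∧
    (∀ x y y', br x (y + y') = br x y + br x y') ∧
    (∀ (c : K) x y, br (c • x) y = c • br x y) ∧
    (∀ (c : K) x y, br x (c • y) = c • br x y) ∧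
    (∀ x y, br x y = - br y x) ∧
    (∀ x y z, br x (br y z) + br y (br z x) + br z (br x y) = 0) := by
  obtain rfl : br = wBracket W := funext₂ fun x y => funext (hbr x y)
  exact ⟨wBracket_add_left W, wBracket_add_right W, wBracket_smul_left W,
    wBracket_smul_right W, wBracket_eq_neg_wBracket W hsym, wBracket_jacobi W hsym hcomm⟩
end

section
/- Let A be the algebra A^{n+1} = A^n ⊕ K e^{n+1} with product e^i · e^j = Σ_{k=1}^n W^{ij}_k e^k + R^{ij} e^{n+1} for 1 ≤ i,j ≤ n and e^i · e^{n+1} = 0, where W^{ij}_k are structure constants of a commutative associative algebra and R^{ij} = R^{ji}. Then A^{n+1} is associative if and only if Σ_{s=1}^n (R^{is} W^{jk}_s − R^{js} W^{ik}_s) = 0 for all i,j,k. -/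
/-- The algebra `A^{n+1} = A^n ⊕ K e^{n+1}` with product
`e^i · e^j = Σ_k W^{ij}_k e^k + R^{ij} e^{n+1}` and `e^i · e^{n+1} = 0` is
associative if and only if `Σ_s (R^{is} W^{jk}_s − R^{js} W^{ik}_s) = 0`. -/
theorem cocycle_condition_iff_associative
    {K : Type*} [Field K] (n : ℕ) (W : Fin n → Fin n → Fin n → K)
    (hsym : ∀ i j s, W i j s = W j i s)
    (hcomm : ∀ i s q p, ∑ k, (W s k i * W q p k - W q k i * W s p k) = 0)
    (R : Fin n → Fin n → K) (hRsym : ∀ i j, R i j = R j i)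
    (mulW : (Fin n → K) → (Fin n → K) → (Fin n → K))
    (hmulW : ∀ x y s, mulW x y s = ∑ i, ∑ j, x i * y j * W i j s)
    (mul : ((Fin n → K) × K) → ((Fin n → K) × K) → ((Fin n → K) × K))
    (hmul : ∀ p q, mul p q = (mulW p.1 q.1, ∑ i, ∑ j, R i j * p.1 i * q.1 j)) :
    (∀ p q r, mul (mul p q) r = mul p (mul q r)) ↔
    (∀ i j k, ∑ s, (R i s * W j k s - R j s * W i k s) = 0) := by
  have congr4 : ∀ (f g : Fin n → Fin n → Fin n → Fin n → K),
      (∀ a b c d, f a b c d = g a b c d) →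
      (∑ a, ∑ b, ∑ c, ∑ d, f a b c d) = ∑ a, ∑ b, ∑ c, ∑ d, g a b c d := by
    intro f g h; simp_rw [h]
  have perm4 : ∀ (f : Fin n → Fin n → Fin n → Fin n → K),
      (∑ a, ∑ b, ∑ i, ∑ j, f a b i j) = ∑ i, ∑ j, ∑ b, ∑ a, f a b i j := by
    intro f
    rw [Finset.sum_comm]
    conv_lhs => enter [2, b]; rw [Finset.sum_comm]
    conv_lhs => enter [2, b, 2, i]; rw [Finset.sum_comm]
    rw [Finset.sum_comm]
    conv_lhs => enter [2, i]; rw [Finset.sum_comm]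
  have perm3 : ∀ (f : Fin n → Fin n → Fin n → K),
      (∑ a, ∑ j, ∑ k, f a j k) = ∑ j, ∑ k, ∑ a, f a j k := by
    intro f
    rw [Finset.sum_comm]
    conv_lhs => enter [2, j]; rw [Finset.sum_comm]
  have keyW : ∀ i j b s, (∑ a, W i j a * W a b s) = ∑ a, W j b a * W i a s := by
    intro i j b s
    have h := hcomm s b i j
    rw [← sub_eq_zero, ← Finset.sum_sub_distrib, ← h]
    refine Finset.sum_congr rfl fun a _ => ?_
    rw [hsym a b, hsym j b]; ring
  constructor
  · intro h i j k
    have E : ∀ i j k : Fin n, (∑ a, R a k * W i j a) = ∑ a, R i a * W j k a := by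
      intro i j k
      have h2 := congrArg Prod.snd
        (h (Pi.single i (1:K), (0:K)) (Pi.single j 1, 0) (Pi.single k 1, 0))
      simp only [hmul, hmulW, Pi.single_apply, ite_mul, mul_ite, mul_zero, zero_mul,
        one_mul, mul_one, Finset.sum_ite_eq, Finset.sum_ite_eq', Finset.mem_univ,
        if_true] at h2
      rw [Finset.sum_comm] at h2
      simpa only [Finset.sum_ite_eq', Finset.mem_univ, if_true] using h2
    rw [Finset.sum_sub_distrib, sub_eq_zero, ← E i j k, ← E j i k]
    exact Finset.sum_congr rfl fun a _ => by rw [hsym i j]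
  · intro hc
    have hc' : ∀ i j k, (∑ s, R i s * W j k s) = ∑ s, R j s * W i k s := by
      intro i j k
      rw [← sub_eq_zero, ← Finset.sum_sub_distrib]; exact hc i j k
    have key2 : ∀ i j b, (∑ a, R a b * W i j a) = ∑ a, R i a * W j b a := by
      intro i j b
      calc (∑ a, R a b * W i j a) = ∑ a, R b a * W i j a :=
            Finset.sum_congr rfl fun a _ => by rw [hRsym]
        _ = ∑ a, R i a * W b j a := hc' b i j
        _ = ∑ a, R i a * W j b a := Finset.sum_congr rfl fun a _ => by rw [hsym b j]
    intro p q r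
    obtain ⟨x, u⟩ := p; obtain ⟨y, v⟩ := q; obtain ⟨z, w⟩ := r
    simp only [hmul]
    refine Prod.ext ?_ ?_
    · funext s
      simp only [hmulW]
      calc (∑ a, ∑ b, (∑ i, ∑ j, x i * y j * W i j a) * z b * W a b s)
          = ∑ a, ∑ b, ∑ i, ∑ j, x i * y j * z b * (W i j a * W a b s) := by
            simp_rw [Finset.sum_mul]; exact congr4 _ _ fun a b i j => by ring
        _ = ∑ i, ∑ j, ∑ b, ∑ a, x i * y j * z b * (W i j a * W a b s) := perm4 _
        _ = ∑ i, ∑ j, ∑ b, x i * y j * z b * ∑ a, (W i j a * W a b s) := by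
            simp_rw [Finset.mul_sum]
        _ = ∑ i, ∑ j, ∑ b, x i * y j * z b * ∑ a, (W j b a * W i a s) := by
            simp_rw [keyW]
        _ = ∑ i, ∑ j, ∑ b, ∑ a, x i * y j * z b * (W j b a * W i a s) := by
            simp_rw [Finset.mul_sum]
        _ = ∑ i, ∑ a, x i * (∑ j, ∑ k, y j * z k * W j k a) * W i a s := by
            simp only [Finset.mul_sum, Finset.sum_mul]
            refine Finset.sum_congr rfl fun i _ => ?_
            conv_rhs => rw [perm3]
            exact Finset.sum_congr rfl fun j _ => Finset.sum_congr rfl fun b _ =>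
              Finset.sum_congr rfl fun a _ => by ring
    · simp only [hmulW]
      calc (∑ a, ∑ b, R a b * (∑ i, ∑ j, x i * y j * W i j a) * z b)
          = ∑ a, ∑ b, ∑ i, ∑ j, x i * y j * z b * (R a b * W i j a) := by
            simp_rw [Finset.mul_sum, Finset.sum_mul]
            exact congr4 _ _ fun a b i j => by ring
        _ = ∑ i, ∑ j, ∑ b, ∑ a, x i * y j * z b * (R a b * W i j a) := perm4 _
        _ = ∑ i, ∑ j, ∑ b, x i * y j * z b * ∑ a, (R a b * W i j a) := by
            simp_rw [Finset.mul_sum]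
        _ = ∑ i, ∑ j, ∑ b, x i * y j * z b * ∑ a, (R i a * W j b a) := by
            simp_rw [key2]
        _ = ∑ i, ∑ j, ∑ b, ∑ a, x i * y j * z b * (R i a * W j b a) := by
            simp_rw [Finset.mul_sum]
        _ = ∑ i, ∑ a, R i a * x i * (∑ j, ∑ k, y j * z k * W j k a) := by
            simp only [Finset.mul_sum, Finset.sum_mul]
            refine Finset.sum_congr rfl fun i _ => ?_
            conv_rhs => rw [perm3]
            exact Finset.sum_congr rfl fun j _ => Finset.sum_congr rfl fun b _ =>
              Finset.sum_congr rfl fun a _ => by ring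
end

section
/- Let f be an SE-function on I_n = {0,...,n} and define A_f = {(i,j) ∈ I_{n-1} × I_{n-1} : f(i,j) = n}. Define f̂ : I_{n-1} × I_{n-1} → I_{n-1} by f̂(i,j) = f(i,j) if (i,j) ∉ A_f and f̂(i,j) = 0 if (i,j) ∈ A_f. Then f̂ is again an SE-function (on I_{n-1}). -/
/-- An SE-function on `I_n = {0,...,n}`: symmetric, associative, `f(i,0)=0`, and
`f(i,j) ≠ 0` implies `f(i,j) > max(i,j)`. -/
def IsSEFunction (n : ℕ) (f : Fin (n + 1) → Fin (n + 1) → Fin (n + 1)) : Prop :=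
  (∀ i j, f i j = f j i) ∧
  (∀ i j k, f i (f j k) = f (f i j) k) ∧
  (∀ i, f i 0 = 0) ∧
  (∀ i j, f i j ≠ 0 → (i : ℕ) < (f i j : ℕ) ∧ (j : ℕ) < (f i j : ℕ))

/-- The restriction `f̂` of an SE-function `f` on `I_n`, obtained by
replacing the value `n` by `0` on `A_f = f⁻¹(n) ∩ (I_{n-1} × I_{n-1})`, is again an
SE-function on `I_{n-1}`. -/
theorem restriction_of_SE_function
    (m : ℕ) (f : Fin (m + 2) → Fin (m + 2) → Fin (m + 2))
    (hf : IsSEFunction (m + 1) f)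
    (fhat : Fin (m + 1) → Fin (m + 1) → Fin (m + 1))
    (hfhat : ∀ i j, fhat i j =
      if h : f i.castSucc j.castSucc = Fin.last (m + 1) then 0
      else (f i.castSucc j.castSucc).castPred h) :
    IsSEFunction m fhat := by
  obtain ⟨hsym, hassoc, hzero, hgrow⟩ := hf
  have hlast : ∀ x, f x (Fin.last (m + 1)) = 0 := by
    intro x
    by_contra h
    have h2 := (hgrow x (Fin.last (m + 1)) h).2
    have hle : (f x (Fin.last (m + 1)) : ℕ) ≤ m + 1 :=
      Nat.lt_succ_iff.mp (f x (Fin.last (m + 1))).isLt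
    simp [Fin.last] at h2
    omega
  have hlast0 : (0 : Fin (m + 2)) ≠ Fin.last (m + 1) := by
    simp [Fin.ext_iff]
  have zeq : ∀ (a b : Fin (m + 1)), f a.castSucc b.castSucc = 0 → fhat a b = 0 := by
    intro a b h
    rw [hfhat, dif_neg (by rw [h]; exact hlast0)]
    simp [Fin.ext_iff, h]
  refine ⟨?_, ?_, ?_, ?_⟩
  · intro i j; rw [hfhat, hfhat, hsym]
  · intro i j k
    by_cases hjk : f j.castSucc k.castSucc = Fin.last (m + 1)
    · have hjk0 : fhat j k = 0 := by
        rw [hfhat, dif_pos hjk]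
      rw [hjk0]
      have hL : fhat i 0 = 0 := zeq i 0 (by simpa using hzero i.castSucc)
      rw [hL]
      by_cases hij : f i.castSucc j.castSucc = Fin.last (m + 1)
      · have hij0 : fhat i j = 0 := by rw [hfhat, dif_pos hij]
        rw [hij0]
        exact (zeq 0 k (by rw [hsym]; simpa using hzero k.castSucc)).symm
      · have hij0 : fhat i j = (f i.castSucc j.castSucc).castPred hij := by
          rw [hfhat, dif_neg hij]
        rw [hij0]
        refine (zeq _ k ?_).symm
        rw [Fin.castSucc_castPred, ← hassoc, hjk, hlast]
    · have hjk0 : fhat j k = (f j.castSucc k.castSucc).castPred hjk := by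
        rw [hfhat, dif_neg hjk]
      rw [hjk0]
      by_cases hij : f i.castSucc j.castSucc = Fin.last (m + 1)
      · have hij0 : fhat i j = 0 := by rw [hfhat, dif_pos hij]
        rw [hij0]
        have hR : fhat 0 k = 0 := zeq 0 k (by rw [hsym]; simpa using hzero k.castSucc)
        rw [hR]
        refine zeq i _ ?_
        rw [Fin.castSucc_castPred, hassoc, hij, hsym, hlast]
      · have hij0 : fhat i j = (f i.castSucc j.castSucc).castPred hij := by
          rw [hfhat, dif_neg hij]
        rw [hij0, hfhat, hfhat]
        simp only [Fin.castSucc_castPred]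
        simp only [hassoc]
  · intro i
    exact zeq i 0 (by simpa using hzero i.castSucc)
  · intro i j hne
    rw [hfhat] at hne ⊢
    by_cases h : f i.castSucc j.castSucc = Fin.last (m + 1)
    · simp [h] at hne
    · simp only [h, dif_neg] at hne ⊢
      have hf0 : f i.castSucc j.castSucc ≠ 0 := by
        intro h0
        apply hne
        simp [Fin.ext_iff, h0]
      have := hgrow i.castSucc j.castSucc hf0
      simpa using this
end

section
/- Let n ≥ 1 and define f_L : I_n × I_n → I_n by f_L(i,j) = i+j if 1 ≤ i,j and i+j < n, f_L(i,j) = 0 if 1 ≤ i,j and i+j ≥ n, and f_L(0,i) = f_L(i,0) = 0. Then f_L is an SE-function: it is symmetric, associative, satisfies f_L(i,0)=0, and f_L(i,j) ≠ 0 implies f_L(i,j) > max(i,j). -/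
/-- The Leibnitz function `f_L(i,j) = i+j` if `1 ≤ i,j` and `i+j < n`,
`f_L(i,j) = 0` otherwise, is an SE-function. -/
theorem leibnitz_function_is_SE
    (n : ℕ) (hn : 1 ≤ n) (fL : Fin (n + 1) → Fin (n + 1) → Fin (n + 1))
    (hfL : ∀ i j, fL i j =
      if h : 1 ≤ (i : ℕ) ∧ 1 ≤ (j : ℕ) ∧ (i : ℕ) + (j : ℕ) < n
      then ⟨(i : ℕ) + (j : ℕ), by omega⟩ else 0) :
    IsSEFunction n fL := by
  have hval : ∀ i j : Fin (n + 1), (fL i j : ℕ) =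
      if 1 ≤ (i : ℕ) ∧ 1 ≤ (j : ℕ) ∧ (i : ℕ) + (j : ℕ) < n
      then (i : ℕ) + (j : ℕ) else 0 := by
    intro i j
    rw [hfL]
    split_ifs <;> simp
  refine ⟨?_, ?_, ?_, ?_⟩
  · intro i j
    apply Fin.val_injective
    rw [hval, hval]
    split_ifs <;> omega
  · intro i j k
    apply Fin.val_injective
    rw [hval, hval, hval, hval]
    split_ifs <;> omega
  · intro i
    apply Fin.val_injective
    rw [hval]
    simp
  · intro i j h
    have h0 : (fL i j : ℕ) ≠ 0 := fun hc => h (Fin.val_injective (by simpa using hc))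
    rw [hval] at h0 ⊢
    split_ifs at h0 ⊢ <;> omega
end

section
/- Let A ⊆ {1,...,n-1} × {1,...,n-1} be a symmetric set (i.e., (i,j) ∈ A implies (j,i) ∈ A) with n ≥ 2. Define f : I_n × I_n → I_n by f(i,j) = n if (i,j) ∈ A and f(i,j) = 0 otherwise. Then f is an SE-function. -/
/-- For a symmetric subset `A ⊆ {1,...,n-1} × {1,...,n-1}` (n ≥ 2),
the function `f(i,j) = n` if `(i,j) ∈ A` and `f(i,j) = 0` otherwise is an
SE-function. -/
theorem abelian_extension_function_is_SE
    (n : ℕ) (hn : 2 ≤ n) (A : Set (Fin (n + 1) × Fin (n + 1)))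
    (hA : ∀ p ∈ A, 1 ≤ (p.1 : ℕ) ∧ (p.1 : ℕ) ≤ n - 1 ∧ 1 ≤ (p.2 : ℕ) ∧ (p.2 : ℕ) ≤ n - 1)
    (hAsym : ∀ i j, (i, j) ∈ A → (j, i) ∈ A)
    (f : Fin (n + 1) → Fin (n + 1) → Fin (n + 1))
    (hfA : ∀ i j, (i, j) ∈ A → f i j = Fin.last n)
    (hfA' : ∀ i j, (i, j) ∉ A → f i j = 0) :
    IsSEFunction n f := by
  -- f i 0 = 0 and f 0 j = 0 and f i (last n) = 0, f (last n) j = 0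
  have h0r : ∀ i, f i 0 = 0 := by
    intro i
    apply hfA'
    intro h
    have := (hA _ h).2.2.1
    simp at this
  have h0l : ∀ j, f 0 j = 0 := by
    intro j
    apply hfA'
    intro h
    have := (hA _ h).1
    simp at this
  have hlr : ∀ i, f i (Fin.last n) = 0 := by
    intro i
    apply hfA'
    intro h
    have h1 := (hA _ h).2.2.2
    simp [Fin.last] at h1
    omega
  have hll : ∀ j, f (Fin.last n) j = 0 := by
    intro j
    apply hfA'
    intro h
    have h1 := (hA _ h).2.1
    simp [Fin.last] at h1
    omega
  have hcases : ∀ i j, f i j = 0 ∨ f i j = Fin.last n := by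
    intro i j
    by_cases h : (i, j) ∈ A
    · exact Or.inr (hfA _ _ h)
    · exact Or.inl (hfA' _ _ h)
  refine ⟨?_, ?_, h0r, ?_⟩
  · intro i j
    by_cases h : (i, j) ∈ A
    · rw [hfA _ _ h, hfA _ _ (hAsym _ _ h)]
    · have h' : (j, i) ∉ A := fun hc => h (hAsym _ _ hc)
      rw [hfA' _ _ h, hfA' _ _ h']
  · intro i j k
    have h1 : f i (f j k) = 0 := by
      rcases hcases j k with h | h <;> rw [h]
      · exact h0r i
      · exact hlr i
    have h2 : f (f i j) k = 0 := by
      rcases hcases i j with h | h <;> rw [h]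
      · exact h0l k
      · exact hll k
    rw [h1, h2]
  · intro i j hne
    have hmem : (i, j) ∈ A := by
      by_contra h
      exact hne (hfA' _ _ h)
    obtain ⟨_, h2, _, h4⟩ := hA _ hmem
    have h2' : (i : ℕ) ≤ n - 1 := h2
    have h4' : (j : ℕ) ≤ n - 1 := h4
    rw [hfA _ _ hmem]
    simp only [Fin.val_last]
    omega
end

section
/- Let W^{ij}_k (1 ≤ i,j,k ≤ n) satisfy the universal extension conditions (symmetry and the commutation identity), and suppose W is in canonical (strictly lower-triangular) form, i.e., W^{ij}_k = 0 unless k > max(i,j). Let G be any Lie algebra and G^n_W the corresponding Lie algebra. Then for 1 ≤ k, s ≤ n, the bracket of the subspaces F[n,k] and F[n,s] is contained in F[n, max(k,s)+1], where F[n,m] = {x ∈ G^n : x_j = 0 for j < m} (with F[n,m] = 0 for m > n). In particular F[n,n] is an abelian ideal of G^n_W. -/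
/-- If `W` satisfies the universal extension conditions and is in
canonical strictly lower-triangular form (`W^{ij}_k = 0` unless `k > max(i,j)`,
indices written 0-based), then `[F[n,k], F[n,s]] ⊆ F[n, max(k,s)+1]` where
`F[n,m] = {x : x_j = 0 for j < m}`; in particular the top filtration step
(`x_j = 0` for all but the last index) is an abelian ideal of `G^n_W`. -/
theorem filtration_bracket_containment
    {K G : Type*} [Field K] [LieRing G] [LieAlgebra K G]
    (n : ℕ) (W : Fin n → Fin n → Fin n → K)
    (hsym : ∀ i j s, W i j s = W j i s)
    (hcomm : ∀ i s q p, ∑ k, (W s k i * W q p k - W q k i * W s p k) = 0)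
    (htri : ∀ i j k : Fin n, (k : ℕ) ≤ max (i : ℕ) (j : ℕ) → W i j k = 0)
    (br : (Fin n → G) → (Fin n → G) → (Fin n → G))
    (hbr : ∀ x y s, br x y s = ∑ i, ∑ j, W i j s • ⁅x i, y j⁆) :
    (∀ (k s : ℕ) (x y : Fin n → G),
      (∀ j : Fin n, (j : ℕ) < k → x j = 0) →
      (∀ j : Fin n, (j : ℕ) < s → y j = 0) →
      ∀ j : Fin n, (j : ℕ) < max k s + 1 → br x y j = 0) ∧
    (∀ x y : Fin n → G, (∀ j : Fin n, (j : ℕ) < n - 1 → x j = 0) →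
      ∀ j : Fin n, (j : ℕ) < n - 1 → br x y j = 0) ∧
    (∀ x y : Fin n → G, (∀ j : Fin n, (j : ℕ) < n - 1 → x j = 0) →
      (∀ j : Fin n, (j : ℕ) < n - 1 → y j = 0) → br x y = 0) := by
  refine ⟨?_, ?_, ?_⟩
  · intro k s x y hx hy j hj
    rw [hbr]
    refine Finset.sum_eq_zero fun i _ => Finset.sum_eq_zero fun j' _ => ?_
    by_cases hxi : (i : ℕ) < k
    · rw [hx i hxi, zero_lie, smul_zero]
    by_cases hyj : (j' : ℕ) < s
    · rw [hy j' hyj, lie_zero, smul_zero]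
    · rw [htri i j' j (by omega), zero_smul]
  · intro x y hx j hj
    rw [hbr]
    refine Finset.sum_eq_zero fun i _ => Finset.sum_eq_zero fun j' _ => ?_
    by_cases hxi : (i : ℕ) < n - 1
    · rw [hx i hxi, zero_lie, smul_zero]
    · have : (i : ℕ) = n - 1 := by omega
      rw [htri i j' j (by omega), zero_smul]
  · intro x y hx hy
    funext s
    rw [hbr]
    refine Finset.sum_eq_zero fun i _ => Finset.sum_eq_zero fun j' _ => ?_
    by_cases hxi : (i : ℕ) < n - 1
    · rw [hx i hxi, zero_lie, smul_zero]
    · have hs : (s : ℕ) ≤ n - 1 := by omega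
      rw [htri i j' s (by omega), zero_smul]
end
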